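/- arXiv:1506.01370 — 3 statements merged into one kernel-verified Lean document; each statement's English description precedes it below -/
import Mathlib

section
/- Let G be a connected locally finite graph with edge set E, let e ∈ E, and let λ, λ' : E → [0,1] be injective labellings that agree on every edge other than e. If e ∈ F_F(λ) and λ'(e) < Z_λ(e), then F_F(λ') = F_F(λ). -/
/-!
Both `e ∈ F_F(λ)` and `λ'(e) < Z_λ(e)` say that every cycle through `e` carries an edge `g ≠ e`
whose label exceeds `λ(e)`, respectively `λ'(e)`. Hence under neither labelling is `e` the maximum
of a cycle, and on a cycle through `e` whose maximum is another edge `f`, the label of `e` stays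
below that of `f` after the change. Since `λ` and `λ'` agree off `e`, the cycle maxima, and so the
two forests, coincide.
-/

namespace MSF

variable {V : Type*}

/-- The free minimal spanning forest of an (injective) labelling: the set of edges `e` such
that there is no finite cycle of `G` containing `e` on which `lab e` is the maximal label. -/
def setFF (G : SimpleGraph V) (lab : G.edgeSet → ℝ) : Set G.edgeSet :=
  {e | ¬ ∃ (v : V) (c : G.Walk v v), c.IsCycle ∧ (e : Sym2 V) ∈ c.edges ∧
    ∀ e' : G.edgeSet, (e' : Sym2 V) ∈ c.edges → lab e' ≤ lab e}

/-- `Z_lab(e)`: the infimum, over finite cycles `C` of `G` containing `e`, of the maximal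
label on `C \ {e}` (equal to `∞` if no finite cycle contains `e`). -/
noncomputable def Z (G : SimpleGraph V) (lab : G.edgeSet → ℝ) (e : G.edgeSet) : ENNReal :=
  ⨅ (v : V) (c : {c : G.Walk v v // c.IsCycle ∧ (e : Sym2 V) ∈ c.edges}),
    sSup {x : ENNReal | ∃ e' : G.edgeSet,
      (e' : Sym2 V) ∈ (c : G.Walk v v).edges ∧ e' ≠ e ∧ x = ENNReal.ofReal (lab e')}

/-- `f` attains the infimum in the definition of `Z_lab(e)`: `f ≠ e` lies on a finite cycle
through `e` on which it has the maximal label among the edges `≠ e`, and this label equals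
`Z_lab(e)`. -/
def Attains (G : SimpleGraph V) (lab : G.edgeSet → ℝ) (e f : G.edgeSet) : Prop :=
  f ≠ e ∧ ENNReal.ofReal (lab f) = Z G lab e ∧
    ∃ (v : V) (c : G.Walk v v), c.IsCycle ∧ (e : Sym2 V) ∈ c.edges ∧
      (f : Sym2 V) ∈ c.edges ∧
      ∀ e' : G.edgeSet, (e' : Sym2 V) ∈ c.edges → e' ≠ e → lab e' ≤ lab f

/-- `φ(e,lab)`: the edge attaining the infimum in `Z_lab(e)` if it exists, `∅` otherwise. -/
noncomputable def phi (G : SimpleGraph V) (lab : G.edgeSet → ℝ) (e : G.edgeSet) :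
    Option G.edgeSet := by
  classical exact if h : ∃ f, Attains G lab e f then some h.choose else none

def CyclesExceed (G : SimpleGraph V) (lab : G.edgeSet → ℝ) (e : G.edgeSet) (y : ℝ) : Prop :=
  ∀ (v : V) (c : G.Walk v v), c.IsCycle → (e : Sym2 V) ∈ c.edges →
    ∃ g : G.edgeSet, (g : Sym2 V) ∈ c.edges ∧ g ≠ e ∧ y < lab g

section

variable {G : SimpleGraph V} {lab lab' : G.edgeSet → ℝ} {e : G.edgeSet}

theorem cyclesExceed_congr (hagree : ∀ e' : G.edgeSet, e' ≠ e → lab' e' = lab e') {y : ℝ} :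
    CyclesExceed G lab' e y ↔ CyclesExceed G lab e y := by
  refine forall₄_congr fun v c _ _ ↦ exists_congr fun g ↦ ?_
  exact ⟨fun ⟨hg, hne, h⟩ ↦ ⟨hg, hne, hagree g hne ▸ h⟩,
    fun ⟨hg, hne, h⟩ ↦ ⟨hg, hne, (hagree g hne).symm ▸ h⟩⟩

theorem mem_setFF_iff_cyclesExceed : e ∈ setFF G lab ↔ CyclesExceed G lab e (lab e) := by
  simp only [setFF, CyclesExceed, Set.mem_ofPred_eq, not_exists, not_and, not_forall, not_le]
  refine forall₂_congr fun v c ↦ forall₂_congr fun _ _ ↦ ⟨?_, ?_⟩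
  · rintro ⟨g, hg, hlt⟩
    exact ⟨g, hg, fun h ↦ (h ▸ hlt).false, hlt⟩
  · rintro ⟨g, hg, -, hlt⟩
    exact ⟨g, hg, hlt⟩

theorem Z_le_ofReal {v : V} {c : G.Walk v v} (hc : c.IsCycle) (he : (e : Sym2 V) ∈ c.edges)
    {x : ℝ} (hx : ∀ e' : G.edgeSet, (e' : Sym2 V) ∈ c.edges → e' ≠ e → lab e' ≤ x) :
    Z G lab e ≤ ENNReal.ofReal x := by
  refine iInf₂_le_of_le v ⟨c, hc, he⟩ (sSup_le ?_)
  rintro _ ⟨e', he', hne, rfl⟩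
  exact ENNReal.ofReal_le_ofReal (hx e' he' hne)

theorem cyclesExceed_of_ofReal_lt_Z {y : ℝ} (hlt : ENNReal.ofReal y < Z G lab e) :
    CyclesExceed G lab e y := by
  intro v c hc he
  by_contra! h
  exact (Z_le_ofReal hc he h).not_gt hlt

theorem not_mem_setFF_of_cyclesExceed (hagree : ∀ e' : G.edgeSet, e' ≠ e → lab' e' = lab e')
    (hexc : CyclesExceed G lab e (lab' e)) {f : G.edgeSet} (hf : f ≠ e) (hnot : f ∉ setFF G lab) :
    f ∉ setFF G lab' := by
  simp only [setFF, Set.mem_ofPred_eq, not_not] at hnot ⊢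
  obtain ⟨v, c, hc, hfc, hmax⟩ := hnot
  refine ⟨v, c, hc, hfc, fun e' he' ↦ ?_⟩
  rw [hagree f hf]
  by_cases h : e' = e
  · subst h
    obtain ⟨g, hg, -, hlt⟩ := hexc v c hc he'
    exact hlt.le.trans (hmax g hg)
  · exact (hagree e' h).symm ▸ hmax e' he'

end

theorem setFF_eq_of_mem_of_lt_general
    {V : Type*} (G : SimpleGraph V)
    (e : G.edgeSet) (lab lab' : G.edgeSet → ℝ)
    (hagree : ∀ e' : G.edgeSet, e' ≠ e → lab' e' = lab e')
    (hmem : e ∈ setFF G lab) (hlt : ENNReal.ofReal (lab' e) < Z G lab e) :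
    setFF G lab' = setFF G lab := by
  have hagree' : ∀ e' : G.edgeSet, e' ≠ e → lab e' = lab' e' := fun e' h ↦ (hagree e' h).symm
  have hexc : CyclesExceed G lab e (lab' e) := cyclesExceed_of_ofReal_lt_Z hlt
  have hexc' : CyclesExceed G lab' e (lab e) :=
    (cyclesExceed_congr hagree).2 (mem_setFF_iff_cyclesExceed.1 hmem)
  ext f
  by_cases hf : f = e
  · subst hf
    exact iff_of_true (mem_setFF_iff_cyclesExceed.2 ((cyclesExceed_congr hagree).2 hexc)) hmem
  · exact not_iff_not.1
      ⟨not_mem_setFF_of_cyclesExceed hagree' hexc' hf, not_mem_setFF_of_cyclesExceed hagree hexc hf⟩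

/-- If `e ∈ F_F(lab)` and `lab' e < Z_lab(e)` then `F_F(lab') = F_F(lab)`. -/
theorem setFF_eq_of_mem_of_lt
    {V : Type*} (G : SimpleGraph V) (hconn : G.Connected)
    (hlf : ∀ v : V, (G.neighborSet v).Finite)
    (e : G.edgeSet) (lab lab' : G.edgeSet → ℝ)
    (hinj : Function.Injective lab) (hinj' : Function.Injective lab')
    (hrange : ∀ e' : G.edgeSet, lab e' ∈ Set.Icc (0 : ℝ) 1)
    (hrange' : ∀ e' : G.edgeSet, lab' e' ∈ Set.Icc (0 : ℝ) 1)
    (hagree : ∀ e' : G.edgeSet, e' ≠ e → lab' e' = lab e')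
    (hmem : e ∈ setFF G lab) (hlt : ENNReal.ofReal (lab' e) < Z G lab e) :
    setFF G lab' = setFF G lab :=
  setFF_eq_of_mem_of_lt_general G e lab lab' hagree hmem hlt

end MSF
end

section
/- Let G be a connected locally finite graph with edge set E, let e ∈ E, and let λ, λ' : E → [0,1] be injective labellings that agree on every edge other than e. If e ∉ F_F(λ) and λ'(e) > Z_λ(e), then F_F(λ') = F_F(λ). -/
namespace SimpleGraph

variable {V : Type*} {G : SimpleGraph V}

lemma Reachable.of_adj_le_reachable {H K : SimpleGraph V} (hHK : H.Adj ≤ K.Reachable)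
    {u v : V} (h : H.Reachable u v) : K.Reachable u v := by
  rw [reachable_eq_reflTransGen] at hHK h ⊢
  exact Relation.ReflTransGen.lift' id hHK _ _ h

lemma Walk.IsCycle.reachable_deleteEdges {u x y : V} {c : G.Walk u u}
    (hc : c.IsCycle) (h : s(x, y) ∈ c.edges) :
    ((fromEdgeSet {g | g ∈ c.edges}).deleteEdges {s(x, y)}).Reachable x y := by
  have hsub : ∀ g ∈ c.edges, g ∈ (fromEdgeSet {g | g ∈ c.edges}).edgeSet := fun g hg => by
    simpa [edgeSet_fromEdgeSet, hg] using G.not_isDiag_of_mem_edgeSet (c.edges_subset_edgeSet hg)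
  exact (adj_and_reachable_delete_edges_iff_exists_cycle.mpr
    ⟨u, c.transfer _ hsub, hc.transfer hsub, by rwa [Walk.edges_transfer]⟩).2

/-- Strong circuit elimination in the cycle matroid of `G`. -/
lemma Walk.IsCycle.exists_isCycle_elimination {u w : V} {c : G.Walk u u} {d : G.Walk w w}
    (hc : c.IsCycle) (hd : d.IsCycle) {e f : Sym2 V} (hec : e ∈ c.edges) (hfc : f ∈ c.edges)
    (hed : e ∈ d.edges) (hfd : f ∉ d.edges) (hfe : f ≠ e) :
    ∃ (x : V) (c' : G.Walk x x), c'.IsCycle ∧ f ∈ c'.edges ∧ e ∉ c'.edges ∧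
      ∀ g ∈ c'.edges, g ∈ c.edges ∨ g ∈ d.edges := by
  set K := fromEdgeSet ({g | g ∈ c.edges ∨ g ∈ d.edges} \ {e}) with hK
  have hKadj : ∀ v v', K.Adj v v' ↔
      ((s(v, v') ∈ c.edges ∨ s(v, v') ∈ d.edges) ∧ s(v, v') ≠ e) ∧ v ≠ v' := fun v v' => by
    simp only [hK, fromEdgeSet_adj, Set.mem_sdiff, Set.mem_singleton_iff, Set.mem_ofPred_eq]
  induction e using Sym2.ind with | h a b => ?_
  induction f using Sym2.ind with | h x y => ?_
  have hab : (K.deleteEdges {s(x, y)}).Reachable a b := by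
    refine (hd.reachable_deleteEdges hed).mono fun v v' hvv' => ?_
    simp only [deleteEdges_adj, fromEdgeSet_adj, hKadj, Set.mem_ofPred_eq,
      Set.mem_singleton_iff] at hvv' ⊢
    refine ⟨⟨⟨Or.inr hvv'.1.1, hvv'.2⟩, hvv'.1.2⟩, fun h => hfd (h ▸ hvv'.1.1)⟩
  -- walk from `y` round `c` back to `x` avoiding `f`, detouring along `d` where it meets `e`
  have hxy : (K.deleteEdges {s(x, y)}).Reachable x y := by
    refine Reachable.of_adj_le_reachable (fun v v' hvv' => ?_) (hc.reachable_deleteEdges hfc)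
    by_cases hv : s(v, v') = s(a, b)
    · rcases Sym2.eq_iff.mp hv with ⟨rfl, rfl⟩ | ⟨rfl, rfl⟩
      exacts [hab, hab.symm]
    · refine Adj.reachable ?_
      simp only [deleteEdges_adj, fromEdgeSet_adj, hKadj, Set.mem_ofPred_eq,
      Set.mem_singleton_iff] at hvv' ⊢
      exact ⟨⟨⟨Or.inl hvv'.1.1, hv⟩, hvv'.1.2⟩, hvv'.2⟩
  have hKxy : K.Adj x y :=
    (hKadj x y).mpr ⟨⟨Or.inl hfc, hfe⟩, G.ne_of_adj (c.adj_of_mem_edges hfc)⟩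
  obtain ⟨z, p, hp, hfp⟩ := adj_and_reachable_delete_edges_iff_exists_cycle.mp ⟨hKxy, hxy⟩
  have hpK : ∀ g ∈ p.edges, (g ∈ c.edges ∨ g ∈ d.edges) ∧ g ≠ s(a, b) := fun g hg => by
    have := p.edges_subset_edgeSet hg
    rw [hK, edgeSet_fromEdgeSet] at this
    exact this.1
  have hpG : ∀ g ∈ p.edges, g ∈ G.edgeSet := fun g hg =>
    (hpK g hg).1.elim (c.edges_subset_edgeSet ·) (d.edges_subset_edgeSet ·)
  refine ⟨z, p.transfer G hpG, hp.transfer hpG, ?_, ?_, ?_⟩ <;> simp only [Walk.edges_transfer]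
  exacts [hfp, fun h => (hpK _ h).2 rfl, fun g hg => (hpK g hg).1]

end SimpleGraph

namespace MSF

open SimpleGraph

variable {V : Type*}

def IsStrictMaxOnCycle (G : SimpleGraph V) (L : G.edgeSet → ℝ) (e : G.edgeSet) : Prop :=
  ∃ (v : V) (d : G.Walk v v), d.IsCycle ∧ (e : Sym2 V) ∈ d.edges ∧
    ∀ e' : G.edgeSet, (e' : Sym2 V) ∈ d.edges → e' ≠ e → L e' < L e

section

variable {G : SimpleGraph V}

lemma exists_isCycle_lt_of_Z_lt {L : G.edgeSet → ℝ} {e : G.edgeSet} {B : ℝ}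
    (h : Z G L e < ENNReal.ofReal B) :
    ∃ (v : V) (d : G.Walk v v), d.IsCycle ∧ (e : Sym2 V) ∈ d.edges ∧
      ∀ e' : G.edgeSet, (e' : Sym2 V) ∈ d.edges → e' ≠ e → L e' < B := by
  obtain ⟨v, hv⟩ := iInf_lt_iff.mp h
  obtain ⟨⟨d, hd, hed⟩, hlt⟩ := iInf_lt_iff.mp hv
  refine ⟨v, d, hd, hed, fun e' he' hne => ?_⟩
  refine (ENNReal.ofReal_lt_ofReal_iff'.mp ((le_sSup ?_).trans_lt hlt)).1
  exact ⟨e', he', hne, rfl⟩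

lemma isStrictMaxOnCycle_of_Z_lt {L L' : G.edgeSet → ℝ} {e : G.edgeSet}
    (hagree : ∀ e' : G.edgeSet, e' ≠ e → L' e' = L e') (h : Z G L e < ENNReal.ofReal (L' e)) :
    IsStrictMaxOnCycle G L' e := by
  obtain ⟨v, d, hd, hed, hlt⟩ := exists_isCycle_lt_of_Z_lt h
  exact ⟨v, d, hd, hed, fun e' he' hne => hagree e' hne ▸ hlt e' he' hne⟩

lemma isStrictMaxOnCycle_of_notMem_setFF {L : G.edgeSet → ℝ}
    (hinj : Function.Injective L) {e : G.edgeSet} (he : e ∉ setFF G L) :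
    IsStrictMaxOnCycle G L e := by
  obtain ⟨v, d, hd, hed, hle⟩ := not_not.mp he
  exact ⟨v, d, hd, hed, fun e' he' hne => (hle e' he').lt_of_ne (hinj.ne hne)⟩

lemma IsStrictMaxOnCycle.notMem_setFF {L : G.edgeSet → ℝ} {e : G.edgeSet}
    (h : IsStrictMaxOnCycle G L e) : e ∉ setFF G L := by
  obtain ⟨v, d, hd, hed, hlt⟩ := h
  refine not_not.mpr ⟨v, d, hd, hed, fun e' he' => ?_⟩
  by_cases hne : e' = e
  · rw [hne]
  · exact (hlt e' he' hne).le

lemma IsStrictMaxOnCycle.notMem_setFF_iff {L : G.edgeSet → ℝ}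
    {e f : G.edgeSet} (h : IsStrictMaxOnCycle G L e) (hfe : f ≠ e) :
    f ∉ setFF G L ↔ ∃ (v : V) (c : G.Walk v v), c.IsCycle ∧ (f : Sym2 V) ∈ c.edges ∧
      (e : Sym2 V) ∉ c.edges ∧ ∀ e' : G.edgeSet, (e' : Sym2 V) ∈ c.edges → L e' ≤ L f := by
  refine ⟨fun hf => ?_, fun ⟨v, c, hc, hfc, _, hle⟩ => not_not.mpr ⟨v, c, hc, hfc, hle⟩⟩
  obtain ⟨v, c, hc, hfc, hle⟩ := not_not.mp hf
  by_cases hec : (e : Sym2 V) ∈ c.edges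
  · obtain ⟨w, d, hd, hed, hlt⟩ := h
    have hd_lt : ∀ e' : G.edgeSet, (e' : Sym2 V) ∈ d.edges → e' ≠ e → L e' < L f :=
      fun e' he' hne => (hlt e' he' hne).trans_le (hle e hec)
    have hfd : (f : Sym2 V) ∉ d.edges := fun hfd => (hd_lt f hfd hfe).false
    obtain ⟨x, c', hc', hfc', hec', hsub⟩ :=
      hc.exists_isCycle_elimination hd hec hfc hed hfd (Subtype.coe_injective.ne hfe)
    refine ⟨x, c', hc', hfc', hec', fun e' he' => (hsub e' he').elim (hle e') fun hd' => ?_⟩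
    exact (hd_lt e' hd' fun h => hec' (h ▸ he')).le
  · exact ⟨v, c, hc, hfc, hec, hle⟩

end

theorem setFF_eq_of_not_mem_of_gt_general
    {V : Type*} (G : SimpleGraph V)
    (e : G.edgeSet) (lab lab' : G.edgeSet → ℝ)
    (hinj : Function.Injective lab)
    (hagree : ∀ e' : G.edgeSet, e' ≠ e → lab' e' = lab e')
    (hmem : e ∉ setFF G lab) (hgt : Z G lab e < ENNReal.ofReal (lab' e)) :
    setFF G lab' = setFF G lab := by
  have hmax := isStrictMaxOnCycle_of_notMem_setFF hinj hmem
  have hmax' := isStrictMaxOnCycle_of_Z_lt hagree hgt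
  ext f
  rw [← not_iff_not]
  by_cases hfe : f = e
  · subst hfe
    exact iff_of_true hmax'.notMem_setFF hmem
  rw [hmax.notMem_setFF_iff hfe, hmax'.notMem_setFF_iff hfe]
  refine exists_congr fun v => exists_congr fun c => and_congr_right fun _ =>
    and_congr_right fun _ => and_congr_right fun hec => forall₂_congr fun e' he' => ?_
  rw [hagree e' fun h => hec (h ▸ he'), hagree f hfe]

/-- If `e ∉ F_F(lab)` and `lab' e > Z_lab(e)` then `F_F(lab') = F_F(lab)`. -/
theorem setFF_eq_of_not_mem_of_gt
    {V : Type*} (G : SimpleGraph V) (hconn : G.Connected)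
    (hlf : ∀ v : V, (G.neighborSet v).Finite)
    (e : G.edgeSet) (lab lab' : G.edgeSet → ℝ)
    (hinj : Function.Injective lab) (hinj' : Function.Injective lab')
    (hrange : ∀ e' : G.edgeSet, lab e' ∈ Set.Icc (0 : ℝ) 1)
    (hrange' : ∀ e' : G.edgeSet, lab' e' ∈ Set.Icc (0 : ℝ) 1)
    (hagree : ∀ e' : G.edgeSet, e' ≠ e → lab' e' = lab e')
    (hmem : e ∉ setFF G lab) (hgt : Z G lab e < ENNReal.ofReal (lab' e)) :
    setFF G lab' = setFF G lab :=
  setFF_eq_of_not_mem_of_gt_general G e lab lab' hinj hagree hmem hgt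

end MSF
end

section
/- Let G be a connected locally finite graph with edge set E and let λ : E → [0,1] be an injective labelling. Let u and v be two vertices lying in the same connected component of the free minimal spanning forest F_F(λ), and let P be the unique simple path from u to v in F_F(λ). Then for every simple path P' from u to v in G, the maximal label on P is at most the maximal label on P': max{λ(e) : e ∈ P} ≤ max{λ(e) : e ∈ P'}. -/
namespace SimpleGraph.Walk

variable {V : Type*} {G : SimpleGraph V}

lemma exists_edges_eq_append_cons {u v : V} (p : G.Walk u v) {s : Sym2 V} (hs : s ∈ p.edges) :
    ∃ (x y : V) (_ : G.Adj x y) (p₁ : G.Walk u x) (p₂ : G.Walk y v),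
      s = s(x, y) ∧ p.edges = p₁.edges ++ s(x, y) :: p₂.edges := by
  induction p with
  | nil => simp at hs
  | @cons a b _ h q ih =>
    rcases List.mem_cons.mp hs with rfl | hs
    · exact ⟨a, b, h, nil, q, rfl, by simp⟩
    · obtain ⟨x, y, hxy, p₁, p₂, rfl, hedges⟩ := ih hs
      exact ⟨x, y, hxy, cons h p₁, p₂, rfl, by simp [hedges]⟩

lemma exists_isCycle_cons_of_notMem_edges {x y : V} (h : G.Adj x y) (w : G.Walk y x)
    (hw : s(x, y) ∉ w.edges) :
    ∃ c : G.Walk x x, c.IsCycle ∧ s(x, y) ∈ c.edges ∧ c.edges ⊆ s(x, y) :: w.edges := by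
  classical
  exact ⟨cons h w.toPath, Path.cons_isCycle _ h fun h' ↦ hw (edges_toPath_subset_edges w h'),
    by simp, List.cons_subset_cons _ (edges_toPath_subset_edges w)⟩

lemma IsTrail.exists_isCycle_of_mem_edges_of_notMem_edges {u v : V} {p q : G.Walk u v}
    (hp : p.IsTrail) {s : Sym2 V} (hsp : s ∈ p.edges) (hsq : s ∉ q.edges) :
    ∃ (x : V) (c : G.Walk x x), c.IsCycle ∧ s ∈ c.edges ∧ c.edges ⊆ p.edges ++ q.edges := by
  obtain ⟨x, y, h, p₁, p₂, rfl, hedges⟩ := p.exists_edges_eq_append_cons hsp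
  have hnd := hedges ▸ hp.edges_nodup
  have hs₁ : s(x, y) ∉ p₁.edges := fun hs ↦
    List.disjoint_of_nodup_append hnd hs List.mem_cons_self
  have hs₂ : s(x, y) ∉ p₂.edges := (List.nodup_cons.mp (List.nodup_append'.mp hnd).2.1).1
  obtain ⟨c, hc, hsc, hcw⟩ := exists_isCycle_cons_of_notMem_edges h
    (p₂.append (q.reverse.append p₁)) (by simp [edges_append, hs₁, hs₂, hsq])
  refine ⟨x, c, hc, hsc, fun t ht ↦ ?_⟩
  replace ht := hcw ht
  simp only [edges_append, edges_reverse, List.mem_cons, List.mem_append, List.mem_reverse] at ht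
  simp only [hedges, List.mem_append, List.mem_cons]
  tauto

lemma exists_mem_edges_forall_le {α : Type*} [LinearOrder α] {u v : V} (p : G.Walk u v)
    (f : G.edgeSet → α) {e : G.edgeSet} (he : (e : Sym2 V) ∈ p.edges) :
    ∃ e₀ : G.edgeSet, (e₀ : Sym2 V) ∈ p.edges ∧
      ∀ e' : G.edgeSet, (e' : Sym2 V) ∈ p.edges → f e' ≤ f e₀ :=
  Set.exists_max_image {e' : G.edgeSet | (e' : Sym2 V) ∈ p.edges} f
    (p.edges.finite_toSet.preimage Subtype.val_injective.injOn) ⟨e, he⟩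

end SimpleGraph.Walk

namespace MSF

variable {V : Type*}

lemma exists_lt_of_mem_setFF {G : SimpleGraph V} {lab : G.edgeSet → ℝ}
    {e : G.edgeSet} (he : e ∈ setFF G lab) {x : V} {c : G.Walk x x} (hc : c.IsCycle)
    (hec : (e : Sym2 V) ∈ c.edges) :
    ∃ f : G.edgeSet, (f : Sym2 V) ∈ c.edges ∧ lab e < lab f := by
  by_contra! h
  exact he ⟨x, c, hc, hec, h⟩

theorem forest_path_minimizes_max_label_general
    {V : Type*} (G : SimpleGraph V)
    (lab : G.edgeSet → ℝ)
    (u v : V) (p : G.Walk u v) (hp : p.IsPath)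
    (hpF : ∀ e : G.edgeSet, (e : Sym2 V) ∈ p.edges → e ∈ setFF G lab)
    (p' : G.Walk u v) :
    ∀ e : G.edgeSet, (e : Sym2 V) ∈ p.edges →
      ∃ e' : G.edgeSet, (e' : Sym2 V) ∈ p'.edges ∧ lab e ≤ lab e' := by
  intro e he
  obtain ⟨e₀, he₀, hmax⟩ := p.exists_mem_edges_forall_le lab he
  by_cases he₀' : (e₀ : Sym2 V) ∈ p'.edges
  · exact ⟨e₀, he₀', hmax e he⟩
  obtain ⟨x, c, hc, he₀c, hcpp'⟩ :=
    hp.isTrail.exists_isCycle_of_mem_edges_of_notMem_edges he₀ he₀'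
  obtain ⟨f, hfc, hlt⟩ := exists_lt_of_mem_setFF (hpF e₀ he₀) hc he₀c
  have hfp' : (f : Sym2 V) ∈ p'.edges :=
    (List.mem_append.mp (hcpp' hfc)).resolve_left fun hfp ↦ (hmax f hfp).not_gt hlt
  exact ⟨f, hfp', (hmax e he).trans hlt.le⟩

/-- The unique path in `F_F(lab)` between two vertices of the same component minimizes the
maximal label among all paths in `G` between them: every label on the forest path is
at most the maximal label on any other path. -/
theorem forest_path_minimizes_max_label
    {V : Type*} (G : SimpleGraph V) (hconn : G.Connected)
    (hlf : ∀ v : V, (G.neighborSet v).Finite)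
    (lab : G.edgeSet → ℝ) (hinj : Function.Injective lab)
    (hrange : ∀ e : G.edgeSet, lab e ∈ Set.Icc (0 : ℝ) 1)
    (u v : V) (p : G.Walk u v) (hp : p.IsPath)
    (hpF : ∀ e : G.edgeSet, (e : Sym2 V) ∈ p.edges → e ∈ setFF G lab)
    (p' : G.Walk u v) (hp' : p'.IsPath) :
    ∀ e : G.edgeSet, (e : Sym2 V) ∈ p.edges →
      ∃ e' : G.edgeSet, (e' : Sym2 V) ∈ p'.edges ∧ lab e ≤ lab e' :=
  forest_path_minimizes_max_label_general G lab u v p hp hpF p'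

end MSF
end
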